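/- arXiv:1209.3555 — 7 statements merged into one kernel-verified Lean document; each statement's English description precedes it below -/
import Mathlib

section
/- Let P(x) = a_n x^n + ... + a_1 x + a_0 be a polynomial with real coefficients, a_n > 0, and let u ≥ 0 be a real number. If for every index j with 0 ≤ j ≤ n one has ∑_{i=j}^{n} a_i u^{i-j} ≥ 0, then u is an upper bound for the positive real roots of P; that is, P(b) > 0 for all b > u. -/
/-- Telescoping identity used below. -/
lemma telescope_pow_sum (T : ℕ → ℝ) (u b : ℝ) :
    ∀ n : ℕ, ∑ j ∈ Finset.range (n + 1), (T j - u * T (j + 1)) * b ^ j =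
      T 0 + (b - u) * (∑ j ∈ Finset.Icc 1 n, T j * b ^ (j - 1)) - u * T (n + 1) * b ^ n := by
  intro n
  induction n with
  | zero => simp
  | succ n ih =>
    rw [Finset.sum_range_succ, ih]
    rw [show Finset.Icc 1 (n + 1) = insert (n + 1) (Finset.Icc 1 n) by
      ext x; simp [Finset.mem_Icc]; omega]
    rw [Finset.sum_insert (by simp)]
    simp only [Nat.add_sub_cancel]
    ring

/-- Truncated-evaluation upper bound criterion: if all truncated evaluations of
`P(x) = ∑_{i=0}^n a_i x^i` at `u ≥ 0` are nonnegative, then `P(b) > 0` for all `b > u`. -/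
theorem truncated_eval_upper_bound (a : ℕ → ℝ) (n : ℕ) (hn : 1 ≤ n) (han : 0 < a n)
    (u : ℝ) (hu : 0 ≤ u)
    (h : ∀ j ≤ n, 0 ≤ ∑ i ∈ Finset.Icc j n, a i * u ^ (i - j)) :
    ∀ b : ℝ, u < b → 0 < ∑ i ∈ Finset.range (n + 1), a i * b ^ i := by
  intro b hb
  have hb0 : 0 < b := lt_of_le_of_lt hu hb
  set T : ℕ → ℝ := fun j => ∑ i ∈ Finset.Icc j n, a i * u ^ (i - j) with hT
  have hTn1 : T (n + 1) = 0 := by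
    simp [hT, Finset.Icc_eq_empty_of_lt (Nat.lt_succ_self n)]
  have hTn : T n = a n := by simp [hT]
  have hrec : ∀ j ≤ n, a j = T j - u * T (j + 1) := by
    intro j hj
    rcases eq_or_lt_of_le hj with rfl | hj'
    · rw [hTn, hTn1]; ring
    · have : T j = a j + u * T (j + 1) := by
        simp only [hT]
        rw [show Finset.Icc j n = insert j (Finset.Icc (j + 1) n) by
          ext x; simp [Finset.mem_Icc]; omega]
        rw [Finset.sum_insert (by simp)]
        rw [Finset.mul_sum]
        simp only [Nat.sub_self, pow_zero, mul_one]
        congr 1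
        apply Finset.sum_congr rfl
        intro i hi
        simp only [Finset.mem_Icc] at hi
        rw [show i - j = (i - (j + 1)) + 1 by omega, pow_succ]
        ring
      rw [this]; ring
  have hident : ∑ i ∈ Finset.range (n + 1), a i * b ^ i =
      T 0 + (b - u) * (∑ j ∈ Finset.Icc 1 n, T j * b ^ (j - 1)) := by
    have := telescope_pow_sum T u b n
    rw [hTn1] at this
    have h2 : ∑ i ∈ Finset.range (n + 1), a i * b ^ i =
        ∑ j ∈ Finset.range (n + 1), (T j - u * T (j + 1)) * b ^ j := by
      apply Finset.sum_congr rfl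
      intro i hi
      simp only [Finset.mem_range] at hi
      rw [hrec i (by omega)]
    rw [h2, this]
    ring
  rw [hident]
  have hsum : 0 < ∑ j ∈ Finset.Icc 1 n, T j * b ^ (j - 1) := by
    apply Finset.sum_pos'
    · intro j hj
      simp only [Finset.mem_Icc] at hj
      exact mul_nonneg (h j hj.2) (pow_nonneg hb0.le _)
    · refine ⟨n, Finset.mem_Icc.mpr ⟨hn, le_refl n⟩, ?_⟩
      rw [hTn]
      exact mul_pos han (pow_pos hb0 _)
  have := h 0 (by omega)
  nlinarith [mul_pos (sub_pos.mpr hb) hsum]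
end

section
/- Let P be a nonzero real polynomial with positive leading coefficient, and suppose u₁ ≥ 0 satisfies ∑_{i=j}^{n} a_i u₁^{i-j} ≥ 0 for all j. Then any real number b with b > u₁ also satisfies ∑_{i=j}^{n} a_i b^{i-j} ≥ 0 for all j; that is, the set of nonnegative reals satisfying the truncated-evaluation nonnegativity condition is upward closed in [0, ∞). -/
/-- Upward closedness of the truncated-evaluation nonnegativity condition. -/
theorem truncated_eval_upward_closed (a : ℕ → ℝ) (n : ℕ) (hn : 1 ≤ n) (han : 0 < a n)
    (u₁ : ℝ) (hu₁ : 0 ≤ u₁)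
    (h : ∀ j ≤ n, 0 ≤ ∑ i ∈ Finset.Icc j n, a i * u₁ ^ (i - j))
    (b : ℝ) (hb : u₁ < b) :
    ∀ j ≤ n, 0 ≤ ∑ i ∈ Finset.Icc j n, a i * b ^ (i - j) := by
  have hb0 : 0 ≤ b := hu₁.trans hb.le
  have key : ∀ k j, j + k = n →
      (∑ i ∈ Finset.Icc j n, a i * u₁ ^ (i - j)) ≤
        ∑ i ∈ Finset.Icc j n, a i * b ^ (i - j) := by
    intro k
    induction k with
    | zero =>
      intro j hj
      have : j = n := by omega
      subst this
      simp [Finset.Icc_self]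
    | succ k ih =>
      intro j hj
      have hjn : j + 1 ≤ n := by omega
      have hsplit : ∀ x : ℝ, ∑ i ∈ Finset.Icc j n, a i * x ^ (i - j) =
          a j + x * ∑ i ∈ Finset.Icc (j+1) n, a i * x ^ (i - (j+1)) := by
        intro x
        have hins : Finset.Icc j n = insert j (Finset.Icc (j+1) n) := by
          ext i
          simp only [Finset.mem_insert, Finset.mem_Icc]
          omega
        rw [hins, Finset.sum_insert (by simp), Finset.mul_sum]
        simp only [Nat.sub_self, pow_zero, mul_one]
        congr 1
        apply Finset.sum_congr rfl
        intro i hi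
        simp only [Finset.mem_Icc] at hi
        have : i - j = (i - (j+1)) + 1 := by omega
        rw [this, pow_succ]
        ring
      rw [hsplit u₁, hsplit b]
      have hS := ih (j+1) (by omega)
      have hSu := h (j+1) hjn
      nlinarith [hS, hSu]
  intro j hj
  exact le_trans (h j hj) (key (n - j) j (by omega))
end

section
/- Suppose P(x) = a_n x^n + ... + a_0 with a_n > 0 has at least one negative coefficient, and let u₁ = inf { u ≥ 0 : ∑_{i=j}^{n} a_i u^{i-j} ≥ 0 for all j = 0,...,n }. If the bisection-style procedure that, starting from base = 1, repeatedly tests whether all truncated evaluations at 1/2^base are nonnegative (incrementing base while the test succeeds) and returns u = 1/2^{base−1}, terminates with output u ≤ 1, then u is an upper bound of the positive roots of P and u < 2·u₁. -/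
lemma bub_sum_split (a : ℕ → ℝ) (n j : ℕ) (h : j < n) (x : ℝ) :
    ∑ i ∈ Finset.Icc j n, a i * x ^ (i - j)
      = a j + x * ∑ i ∈ Finset.Icc (j+1) n, a i * x ^ (i - (j+1)) := by
  have hins : Finset.Icc j n = insert j (Finset.Icc (j+1) n) := by
    ext i; simp only [Finset.mem_Icc, Finset.mem_insert]; omega
  rw [hins, Finset.sum_insert (by simp only [Finset.mem_Icc]; omega)]
  simp only [Nat.sub_self, pow_zero, mul_one]
  congr 1
  rw [Finset.mul_sum]
  refine Finset.sum_congr rfl (fun i hi => ?_)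
  simp only [Finset.mem_Icc] at hi
  have h2 : i - j = (i - (j+1)) + 1 := by omega
  rw [h2, pow_succ]; ring

lemma bub_key (a : ℕ → ℝ) (n : ℕ) (u b : ℝ) (hu : 0 ≤ u) (hub : u < b)
    (hheld : ∀ j ≤ n, 0 ≤ ∑ i ∈ Finset.Icc j n, a i * u ^ (i - j)) :
    ∀ d j, j + d = n → 1 ≤ d →
      (∑ i ∈ Finset.Icc j n, a i * u ^ (i - j)) + (b - u) * b ^ (n - j - 1) * a n
        ≤ ∑ i ∈ Finset.Icc j n, a i * b ^ (i - j) := by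
  have hb : 0 < b := lt_of_le_of_lt hu hub
  intro d
  induction d with
  | zero => omega
  | succ d ih =>
    intro j hj _
    rcases Nat.eq_zero_or_pos d with hd0 | hd1
    · -- j + 1 = n
      subst hd0
      have hjn : j + 1 = n := by omega
      have hjlt : j < n := by omega
      rw [bub_sum_split a n j hjlt u, bub_sum_split a n j hjlt b]
      have hsn : ∀ x : ℝ, ∑ i ∈ Finset.Icc (j+1) n, a i * x ^ (i - (j+1)) = a n := by
        intro x
        rw [hjn, Finset.Icc_self, Finset.sum_singleton, Nat.sub_self, pow_zero, mul_one]
      rw [hsn u, hsn b]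
      have : n - j - 1 = 0 := by omega
      rw [this, pow_zero]
      ring_nf
      linarith
    · -- j + 1 < n
      have hjlt : j < n := by omega
      have h1 := ih (j+1) (by omega) hd1
      rw [bub_sum_split a n j hjlt u, bub_sum_split a n j hjlt b]
      have hS := hheld (j+1) (by omega)
      set Su := ∑ i ∈ Finset.Icc (j+1) n, a i * u ^ (i - (j+1)) with hSu
      set Sb := ∑ i ∈ Finset.Icc (j+1) n, a i * b ^ (i - (j+1)) with hSb
      have hm : n - (j+1) - 1 = n - j - 2 := by omega
      rw [hm] at h1
      have hexp : n - j - 1 = (n - j - 2) + 1 := by omega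
      rw [hexp, pow_succ]
      set m := n - j - 2
      have hpow : (0:ℝ) ≤ b ^ m := pow_nonneg hb.le m
      nlinarith [mul_le_mul_of_nonneg_left h1 hb.le,
        mul_le_mul_of_nonneg_right hub.le hS]

lemma bub_last (a : ℕ → ℝ) (n : ℕ) (x : ℝ) :
    ∑ i ∈ Finset.Icc n n, a i * x ^ (i - n) = a n := by
  rw [Finset.Icc_self, Finset.sum_singleton, Nat.sub_self, pow_zero, mul_one]

/-- upward closure of the condition set -/
lemma bub_up (a : ℕ → ℝ) (n : ℕ) (han : 0 < a n) (u b : ℝ) (hu : 0 ≤ u) (hub : u ≤ b)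
    (hheld : ∀ j ≤ n, 0 ≤ ∑ i ∈ Finset.Icc j n, a i * u ^ (i - j)) :
    ∀ j ≤ n, 0 ≤ ∑ i ∈ Finset.Icc j n, a i * b ^ (i - j) := by
  rcases eq_or_lt_of_le hub with rfl | hlt
  · exact hheld
  intro j hj
  rcases eq_or_lt_of_le hj with rfl | hjlt
  · rw [bub_last]; exact han.le
  · have := bub_key a n u b hu hlt hheld (n - j) j (by omega) (by omega)
    have hb : 0 < b := lt_of_le_of_lt hu hlt
    have h1 : 0 ≤ (b - u) * b ^ (n - j - 1) * a n :=
      mul_nonneg (mul_nonneg (by linarith) (pow_nonneg hb.le _)) han.le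
    have h2 := hheld j hj
    linarith

lemma bub_nonempty (a : ℕ → ℝ) (n : ℕ) (han : 0 < a n) :
    ∃ c : ℝ, 0 ≤ c ∧ ∀ j ≤ n, 0 ≤ ∑ i ∈ Finset.Icc j n, a i * c ^ (i - j) := by
  set M := ∑ i ∈ Finset.range (n+1), |a i| with hM
  set c := max 1 (M / a n) with hc
  have hc1 : (1:ℝ) ≤ c := le_max_left _ _
  have hc0 : (0:ℝ) ≤ c := by linarith
  have hcM : M ≤ a n * c := by
    have : M / a n ≤ c := le_max_right _ _
    rw [div_le_iff₀ han] at this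
    linarith [this]
  refine ⟨c, hc0, fun j hj => ?_⟩
  rcases eq_or_lt_of_le hj with rfl | hjlt
  · rw [bub_last]; exact han.le
  · rw [← Finset.Ico_add_one_right_eq_Icc, Finset.sum_Ico_succ_top (by omega)]
    have hterm : ∀ i ∈ Finset.Ico j n, -(|a i| * c ^ (n - j - 1)) ≤ a i * c ^ (i - j) := by
      intro i hi
      simp only [Finset.mem_Ico] at hi
      have hpow : c ^ (i - j) ≤ c ^ (n - j - 1) := pow_le_pow_right₀ hc1 (by omega)
      have h1 : |a i| * c ^ (i - j) ≤ |a i| * c ^ (n - j - 1) :=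
        mul_le_mul_of_nonneg_left hpow (abs_nonneg _)
      have h2 : -|a i| * c ^ (i - j) ≤ a i * c ^ (i - j) :=
        mul_le_mul_of_nonneg_right (neg_abs_le _) (pow_nonneg hc0 _)
      nlinarith
    have hsum : -(M * c ^ (n - j - 1)) ≤ ∑ i ∈ Finset.Ico j n, a i * c ^ (i - j) := by
      have h3 : ∑ i ∈ Finset.Ico j n, -(|a i| * c ^ (n - j - 1))
          ≤ ∑ i ∈ Finset.Ico j n, a i * c ^ (i - j) := Finset.sum_le_sum hterm
      have h4 : ∑ i ∈ Finset.Ico j n, -(|a i| * c ^ (n - j - 1))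
          = -((∑ i ∈ Finset.Ico j n, |a i|) * c ^ (n - j - 1)) := by
        rw [Finset.sum_neg_distrib, Finset.sum_mul]
      have h5 : ∑ i ∈ Finset.Ico j n, |a i| ≤ M := by
        apply Finset.sum_le_sum_of_subset_of_nonneg
        · intro i hi; simp only [Finset.mem_Ico] at hi; simp only [Finset.mem_range]; omega
        · intro i _ _; exact abs_nonneg _
      have h6 : (0:ℝ) ≤ c ^ (n - j - 1) := pow_nonneg hc0 _
      nlinarith
    have hlead : M * c ^ (n - j - 1) ≤ a n * c ^ (n - j) := by
      have hpows : c ^ (n - j) = c ^ (n - j - 1) * c := by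
        rw [← pow_succ]; congr 1; omega
      rw [hpows]
      have h6 : (0:ℝ) ≤ c ^ (n - j - 1) := pow_nonneg hc0 _
      nlinarith [mul_le_mul_of_nonneg_right hcM h6]
    linarith

/-- Correctness of the bisection-style upper-bound procedure: if it terminates returning
`u = 1/2^(base-1) ≤ 1` (the condition held at `1/2^(base-1)` and failed at `1/2^base`),
then `u` is an upper bound of the positive roots of `P` and `u < 2·u₁`, where `u₁` is the
optimal bound satisfying the truncated-evaluation criterion. -/
theorem bisection_upper_bound (a : ℕ → ℝ) (n : ℕ) (hn : 1 ≤ n) (han : 0 < a n)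
    (hneg : ∃ i ≤ n, a i < 0)
    (u₁ : ℝ)
    (hu₁ : u₁ = sInf {u : ℝ | 0 ≤ u ∧ ∀ j ≤ n, 0 ≤ ∑ i ∈ Finset.Icc j n, a i * u ^ (i - j)})
    (base : ℕ) (hbase : 1 ≤ base)
    (hheld : ∀ j ≤ n, 0 ≤ ∑ i ∈ Finset.Icc j n, a i * ((1 : ℝ) / 2 ^ (base - 1)) ^ (i - j))
    (hfail : ¬ ∀ j ≤ n, 0 ≤ ∑ i ∈ Finset.Icc j n, a i * ((1 : ℝ) / 2 ^ base) ^ (i - j))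
    (hle : (1 : ℝ) / 2 ^ (base - 1) ≤ 1) :
    (∀ b : ℝ, (1 : ℝ) / 2 ^ (base - 1) < b → 0 < ∑ i ∈ Finset.range (n + 1), a i * b ^ i) ∧
    (1 : ℝ) / 2 ^ (base - 1) < 2 * u₁ := by
  set u : ℝ := 1 / 2 ^ (base - 1) with hu_def
  have hu0 : 0 < u := by positivity
  constructor
  · intro b hb
    have hkey := bub_key a n u b hu0.le hb hheld n 0 (by omega) hn
    have hb0 : 0 < b := lt_trans hu0 hb
    have h1 : 0 < (b - u) * b ^ (n - 0 - 1) * a n :=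
      mul_pos (mul_pos (by linarith) (pow_pos hb0 _)) han
    have h2 := hheld 0 (by omega)
    have heq : ∑ i ∈ Finset.range (n + 1), a i * b ^ i
        = ∑ i ∈ Finset.Icc 0 n, a i * b ^ (i - 0) := by
      rw [Finset.range_eq_Ico, Finset.Ico_add_one_right_eq_Icc]
      simp
    rw [heq]
    linarith
  · -- second part
    set T : Set ℝ := {u : ℝ | 0 ≤ u ∧ ∀ j ≤ n, 0 ≤ ∑ i ∈ Finset.Icc j n, a i * u ^ (i - j)}
      with hT
    set v : ℝ := 1 / 2 ^ base with hv_def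
    have hv0 : 0 < v := by positivity
    have hvT : v ∉ T := by
      intro hvmem
      exact hfail hvmem.2
    have hclosed : IsClosed T := by
      have : T = Set.Ici (0:ℝ) ∩ ⋂ j ∈ Set.Iic n,
          {u : ℝ | 0 ≤ ∑ i ∈ Finset.Icc j n, a i * u ^ (i - j)} := by
        ext x
        simp only [hT, Set.mem_setOf_eq, Set.mem_inter_iff, Set.mem_Ici, Set.mem_iInter,
          Set.mem_Iic]
      rw [this]
      refine IsClosed.inter isClosed_Ici (isClosed_biInter fun j _ => ?_)
      exact isClosed_le continuous_const (by continuity)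
    have hne : T.Nonempty := by
      obtain ⟨c, hc0, hc⟩ := bub_nonempty a n han
      exact ⟨c, hc0, hc⟩
    have hbdd : BddBelow T := ⟨0, fun x hx => hx.1⟩
    have hmem : sInf T ∈ T := hclosed.csInf_mem hne hbdd
    have hvlt : v < sInf T := by
      by_contra hcon
      push_neg at hcon
      apply hvT
      refine ⟨hv0.le, ?_⟩
      exact bub_up a n han (sInf T) v hmem.1 hcon hmem.2
    have hu₁T : u₁ = sInf T := hu₁
    have h2v : u = 2 * v := by
      rw [hu_def, hv_def]
      have hpb : (2:ℝ) ^ base = 2 ^ (base - 1) * 2 := by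
        rw [← pow_succ]; congr 1; omega
      rw [hpb]
      have hne2 : ((2:ℝ) ^ (base - 1)) ≠ 0 := by positivity
      field_simp
      try ring
    rw [h2v, hu₁T]
    linarith
end

section
/- Let P(x) = a_n x^n + ... + a_0 be a real polynomial with a_n > 0, and let u > 0 be such that P can be decomposed as in the Akritas–Strzeboński–Vigklas pairing: every negative term −b x^e (b > 0) of P is matched with a positive quantity c x^f with f > e, c u^f ≥ b u^e, where for each positive coefficient a_j the total of all matched quantities c with exponent j is at most a_j. Then for every k with 0 ≤ k ≤ n, ∑_{i=k}^{n} a_i u^{i-k} ≥ 0; in particular the bound from the truncated-evaluation criterion is at least as sharp as the Akritas–Strzeboński–Vigklas bound. -/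
/-- Akritas–Strzeboński–Vigklas pairing implies the truncated-evaluation criterion:
if every negative coefficient `a i < 0` is matched at `u` with a part `c i` of a positive
coefficient of strictly higher exponent `f i`, dominating it at `u`, and for each positive
coefficient the parts carved from it sum to at most that coefficient, then all truncated
evaluations at `u` are nonnegative. -/
theorem asv_pairing_implies_truncated_eval (a : ℕ → ℝ) (n : ℕ) (hn : 1 ≤ n) (han : 0 < a n)
    (u : ℝ) (hu : 0 < u) (f : ℕ → ℕ) (c : ℕ → ℝ)
    (hmatch : ∀ i ≤ n, a i < 0 →
      i < f i ∧ f i ≤ n ∧ 0 < a (f i) ∧ 0 < c i ∧ (-a i) * u ^ i ≤ c i * u ^ (f i))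
    (hparts : ∀ j ≤ n, 0 < a j →
      (∑ i ∈ (Finset.range (n + 1)).filter (fun i => a i < 0 ∧ f i = j), c i) ≤ a j) :
    ∀ k ≤ n, 0 ≤ ∑ i ∈ Finset.Icc k n, a i * u ^ (i - k) := by
  intro k hk
  have hpow : (0:ℝ) < u ^ k := pow_pos hu k
  set S := Finset.Icc k n with hS
  have hmemT : ∀ i ∈ S.filter (fun i => a i < 0), i ≤ n ∧ a i < 0 := by
    intro i hi
    simp only [hS, Finset.mem_filter, Finset.mem_Icc] at hi
    exact ⟨hi.1.2, hi.2⟩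
  have hmaps : ∀ i ∈ S.filter (fun i => a i < 0), f i ∈ S.filter (fun j => 0 < a j) := by
    intro i hi
    simp only [hS, Finset.mem_filter, Finset.mem_Icc] at hi ⊢
    obtain ⟨⟨hki, hin⟩, hneg⟩ := hi
    obtain ⟨hlt, hfn, hpos, _, _⟩ := hmatch i hin hneg
    exact ⟨⟨le_trans hki (le_of_lt hlt), hfn⟩, hpos⟩
  have h1 : ∑ i ∈ S.filter (fun i => a i < 0), (-a i) * u ^ i
      ≤ ∑ i ∈ S.filter (fun i => a i < 0), c i * u ^ (f i) := by
    apply Finset.sum_le_sum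
    intro i hi
    obtain ⟨hin, hneg⟩ := hmemT i hi
    exact (hmatch i hin hneg).2.2.2.2
  have h2 : ∑ i ∈ S.filter (fun i => a i < 0), c i * u ^ (f i)
      = ∑ j ∈ S.filter (fun j => 0 < a j),
          (∑ i ∈ (S.filter (fun i => a i < 0)).filter (fun i => f i = j), c i) * u ^ j := by
    rw [← Finset.sum_fiberwise_of_maps_to hmaps (fun i => c i * u ^ (f i))]
    apply Finset.sum_congr rfl
    intro j _
    rw [Finset.sum_mul]
    apply Finset.sum_congr rfl
    intro i hi
    simp only [Finset.mem_filter] at hi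
    rw [hi.2]
  have h3 : ∀ j ∈ S.filter (fun j => 0 < a j),
      (∑ i ∈ (S.filter (fun i => a i < 0)).filter (fun i => f i = j), c i) ≤ a j := by
    intro j hj
    simp only [hS, Finset.mem_filter, Finset.mem_Icc] at hj
    refine le_trans (Finset.sum_le_sum_of_subset_of_nonneg ?_ ?_) (hparts j hj.1.2 hj.2)
    · intro i hi
      simp only [hS, Finset.mem_filter, Finset.mem_Icc, Finset.mem_range] at hi ⊢
      exact ⟨by omega, hi.1.2, hi.2⟩
    · intro i hi _
      simp only [Finset.mem_filter, Finset.mem_range] at hi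
      exact le_of_lt (hmatch i (by omega) hi.2.1).2.2.2.1
  have h4 : ∑ j ∈ S.filter (fun j => 0 < a j),
          (∑ i ∈ (S.filter (fun i => a i < 0)).filter (fun i => f i = j), c i) * u ^ j
      ≤ ∑ j ∈ S.filter (fun j => 0 < a j), a j * u ^ j := by
    apply Finset.sum_le_sum
    intro j hj
    exact mul_le_mul_of_nonneg_right (h3 j hj) (le_of_lt (pow_pos hu j))
  have h5 : ∑ j ∈ S.filter (fun j => 0 < a j), a j * u ^ j
      ≤ ∑ j ∈ S.filter (fun j => ¬ a j < 0), a j * u ^ j := by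
    apply Finset.sum_le_sum_of_subset_of_nonneg
    · intro j hj
      simp only [Finset.mem_filter] at hj ⊢
      exact ⟨hj.1, not_lt_of_gt hj.2⟩
    · intro j hj _
      simp only [Finset.mem_filter, not_lt] at hj
      exact mul_nonneg hj.2 (le_of_lt (pow_pos hu j))
  have hsplit := Finset.sum_filter_add_sum_filter_not S (fun i => a i < 0)
      (fun i => a i * u ^ i)
  have hnegsum : ∑ i ∈ S.filter (fun i => a i < 0), a i * u ^ i
      = -(∑ i ∈ S.filter (fun i => a i < 0), (-a i) * u ^ i) := by
    rw [← Finset.sum_neg_distrib]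
    apply Finset.sum_congr rfl
    intro i _
    ring
  have key : 0 ≤ ∑ i ∈ S, a i * u ^ i := by
    rw [h2] at h1
    linarith
  have heq : ∑ i ∈ S, a i * u ^ i = (∑ i ∈ S, a i * u ^ (i - k)) * u ^ k := by
    rw [Finset.sum_mul]
    apply Finset.sum_congr rfl
    intro i hi
    rw [hS, Finset.mem_Icc] at hi
    rw [mul_assoc, ← pow_add]
    congr 2
    omega
  nlinarith [key, heq, hpow]
end

section
/- Let P be a real polynomial with V(P) = 1. Then P has exactly one positive real root, and this root is simple. -/
/-- Number of sign variations of a list of reals whose zero entries have already been removed. -/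
noncomputable def signVarAux : List ℝ → ℕ
  | x :: y :: t => (if x * y < 0 then 1 else 0) + signVarAux (y :: t)
  | _ => 0

/-- Number of sign variations of a list of reals (zero entries are deleted first). -/
noncomputable def signVar (l : List ℝ) : ℕ := signVarAux (l.filter (fun x => x ≠ 0))

/-- Sign variation count of the coefficient sequence `(a₀, a₁, …, a_n)` of a polynomial. -/
noncomputable def polySignVar (P : Polynomial ℝ) : ℕ :=
  signVar ((List.range (P.natDegree + 1)).map fun i => P.coeff i)

lemma signVarAux_nil : signVarAux [] = 0 := rfl

lemma signVarAux_singleton (x : ℝ) : signVarAux [x] = 0 := rfl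

lemma signVarAux_cons (x y : ℝ) (t : List ℝ) :
    signVarAux (x :: y :: t) = (if x * y < 0 then 1 else 0) + signVarAux (y :: t) := rfl

lemma sv_zero_sign {t : List ℝ} {y : ℝ} (h : signVarAux (y :: t) = 0)
    (hnz : ∀ x ∈ y :: t, x ≠ 0) : ∀ z ∈ y :: t, 0 < y * z := by
  induction t generalizing y with
  | nil =>
    intro z hz
    simp only [List.mem_singleton] at hz
    subst hz
    exact mul_self_pos.2 (hnz z (by simp))
  | cons a t ih =>
    have hy : y ≠ 0 := hnz y (by simp)
    have ha : a ≠ 0 := hnz a (by simp)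
    rw [signVarAux_cons] at h
    have h1 : ¬ (y * a < 0) := by
      intro hc
      rw [if_pos hc] at h
      omega
    rw [if_neg h1, zero_add] at h
    have hya : 0 < y * a :=
      lt_of_le_of_ne (not_lt.1 h1) (Ne.symm (mul_ne_zero hy ha))
    intro z hz
    rcases List.mem_cons.1 hz with rfl | hz'
    · exact mul_self_pos.2 hy
    · have haz : 0 < a * z := ih h (fun w hw => hnz w (List.mem_cons_of_mem _ hw)) z hz'
      nlinarith [mul_pos hya haz, mul_self_pos.mpr ha]

lemma filter_eq_cons_first {t : List ℝ} {y : ℝ} {s : List ℝ}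
    (h : t.filter (fun x => x ≠ 0) = y :: s) :
    ∃ i : ℕ, ∃ hi : i < t.length, t[i] = y ∧ ∀ j, j < i → ∀ hj : j < t.length, t[j] = 0 := by
  induction t generalizing y s with
  | nil => simp at h
  | cons a t ih =>
    by_cases ha : a = 0
    · subst ha
      rw [List.filter_cons_of_neg (by simp)] at h
      obtain ⟨i, hi, h1, h2⟩ := ih h
      refine ⟨i+1, by simpa using Nat.succ_lt_succ hi, by simpa using h1, ?_⟩
      intro j hj hjl
      match j, hjl with
      | 0, _ => simp
      | (j+1), hjl =>
        have : j < t.length := by simp at hjl; omega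
        simpa using h2 j (by omega) this
    · rw [List.filter_cons_of_pos (by simp [ha])] at h
      have h' := List.cons.inj h
      exact ⟨0, by simp, by simpa using h'.1, fun j hj _ => by omega⟩

lemma signVar_one_split (l : List ℝ) (h : signVar l = 1) :
    ∃ ε : ℝ, (ε = 1 ∨ ε = -1) ∧ ∃ k : ℕ,
      (∀ i, ∀ hi : i < l.length, i < k → ε * l[i] ≤ 0) ∧
      (∀ i, ∀ hi : i < l.length, k ≤ i → 0 ≤ ε * l[i]) ∧
      (∃ i, ∃ hi : i < l.length, i < k ∧ ε * l[i] < 0) ∧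
      (∃ i, ∃ hi : i < l.length, k ≤ i ∧ 0 < ε * l[i]) := by
  induction l with
  | nil => simp [signVar, signVarAux_nil] at h
  | cons x t ih =>
    by_cases hx : x = 0
    · subst hx
      have ht : signVar t = 1 := by
        rw [signVar] at h ⊢
        rwa [List.filter_cons_of_neg (by simp)] at h
      obtain ⟨ε, hε, k, H1, H2, H3, H4⟩ := ih ht
      refine ⟨ε, hε, k+1, ?_, ?_, ?_, ?_⟩
      · intro i hi hik
        match i, hi with
        | 0, _ => simp
        | (i+1), hi =>
          have hi' : i < t.length := by simp at hi; omega
          simpa using H1 i hi' (by omega)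
      · intro i hi hki
        match i, hi with
        | 0, _ => omega
        | (i+1), hi =>
          have hi' : i < t.length := by simp at hi; omega
          simpa using H2 i hi' (by omega)
      · obtain ⟨i, hi, hik, hneg⟩ := H3
        exact ⟨i+1, by simpa using Nat.succ_lt_succ hi, by omega, by simpa using hneg⟩
      · obtain ⟨i, hi, hki, hpos⟩ := H4
        exact ⟨i+1, by simpa using Nat.succ_lt_succ hi, by omega, by simpa using hpos⟩
    · have hfil : (x :: t).filter (fun x => x ≠ 0) = x :: t.filter (fun x => x ≠ 0) :=
        List.filter_cons_of_pos (by simp [hx])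
      rw [signVar, hfil] at h
      rcases hft : t.filter (fun x => x ≠ 0) with _ | ⟨y, s⟩
      · rw [hft] at h
        rw [signVarAux_singleton] at h
        omega
      · rw [hft, signVarAux_cons] at h
        have hynz : y ≠ 0 := by
          have hw : y ∈ t.filter (fun x => x ≠ 0) := by
            rw [hft]; exact List.mem_cons_self
          simpa using (List.mem_filter.1 hw).2
        have hymem : y ∈ t := List.mem_of_mem_filter
          (by rw [hft]; exact List.mem_cons_self)
        obtain ⟨i0, hi0, hy0, hfirst⟩ := filter_eq_cons_first hft
        by_cases hxy : x * y < 0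
        · rw [if_pos hxy] at h
          have h0 : signVarAux (y :: s) = 0 := by omega
          have hallnz : ∀ w ∈ y :: s, w ≠ 0 := by
            intro w hw
            have hw' : w ∈ t.filter (fun x => x ≠ 0) := by rw [hft]; exact hw
            simpa using (List.mem_filter.1 hw').2
          have hall : ∀ z ∈ t, z ≠ 0 → 0 < y * z := by
            intro z hz hznz
            have hzf : z ∈ y :: s := by
              rw [← hft]; exact List.mem_filter.2 ⟨hz, by simp [hznz]⟩
            exact sv_zero_sign h0 hallnz z hzf
          set ε : ℝ := if 0 < y then 1 else -1 with hεdef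
          have hε : ε = 1 ∨ ε = -1 := by
            rw [hεdef]; split <;> simp
          have hεy : 0 < ε * y := by
            rcases lt_trichotomy y 0 with h' | h' | h'
            · rw [hεdef, if_neg (by linarith)]; linarith
            · exact absurd h' hynz
            · rw [hεdef, if_pos h']; linarith
          have hεx : ε * x < 0 := by
            rcases hε with h'' | h'' <;> rw [h''] at hεy ⊢ <;> nlinarith
          refine ⟨ε, hε, 1, ?_, ?_, ?_, ?_⟩
          · intro i hi hik
            match i, hi with
            | 0, _ => simpa using hεx.le
            | (i+1), hi => omega
          · intro i hi hki
            match i, hi with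
            | 0, _ => omega
            | (i+1), hi =>
              have hi' : i < t.length := by simp at hi; omega
              simp only [List.getElem_cons_succ]
              by_cases hz : t[i] = 0
              · rw [hz]; simp
              · have h1 : 0 < y * t[i] := hall _ (List.getElem_mem hi') hz
                rcases hε with h'' | h'' <;> rw [h''] at hεy ⊢ <;> nlinarith
          · exact ⟨0, by simp, zero_lt_one, by simpa using hεx⟩
          · refine ⟨i0+1, by simpa using Nat.succ_lt_succ hi0, by omega, ?_⟩
            simpa [List.getElem_cons_succ, hy0] using hεy
        · rw [if_neg hxy, zero_add] at h
          have ht1 : signVar t = 1 := by rw [signVar, hft]; exact h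
          obtain ⟨ε, hε, k, H1, H2, H3, H4⟩ := ih ht1
          obtain ⟨i1, hi1, hik1, hneg1⟩ := H3
          have hi0le : i0 ≤ i1 := by
            by_contra hgt
            push_neg at hgt
            have hz := hfirst i1 hgt hi1
            rw [hz] at hneg1
            simp at hneg1
          have hi0k : i0 < k := lt_of_le_of_lt hi0le hik1
          have hεy : ε * y < 0 := by
            have hle := H1 i0 hi0 hi0k
            rw [hy0] at hle
            rcases hle.lt_or_eq with h' | h'
            · exact h'
            · exfalso
              rcases hε with h'' | h'' <;> rw [h''] at h' <;> simp at h' <;> exact hynz h'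
          have hxyp : 0 < x * y :=
            lt_of_le_of_ne (not_lt.1 hxy) (Ne.symm (mul_ne_zero hx hynz))
          have hεx : ε * x < 0 := by
            rcases hε with h'' | h'' <;> rw [h''] at hεy ⊢ <;> nlinarith
          refine ⟨ε, hε, k+1, ?_, ?_, ?_, ?_⟩
          · intro i hi hik
            match i, hi with
            | 0, _ => simpa using hεx.le
            | (i+1), hi =>
              have hi' : i < t.length := by simp at hi; omega
              simpa using H1 i hi' (by omega)
          · intro i hi hki
            match i, hi with
            | 0, _ => omega
            | (i+1), hi =>
              have hi' : i < t.length := by simp at hi; omega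
              simpa using H2 i hi' (by omega)
          · exact ⟨0, by simp, by omega, by simpa using hεx⟩
          · obtain ⟨i, hi, hki, hpos⟩ := H4
            exact ⟨i+1, by simpa using Nat.succ_lt_succ hi, by omega, by simpa using hpos⟩

lemma main_aux (Q : Polynomial ℝ) (k : ℕ) (hQ : Q ≠ 0) (hk : k ≤ Q.natDegree)
    (hlow : ∀ i < k, Q.coeff i ≤ 0)
    (hhigh : ∀ i, k ≤ i → 0 ≤ Q.coeff i)
    (hneg : ∃ j, j < k ∧ Q.coeff j < 0) :
    ∃ x : ℝ, 0 < x ∧ Q.IsRoot x ∧ Q.rootMultiplicity x = 1 ∧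
      ∀ y : ℝ, 0 < y → Q.IsRoot y → y = x := by
  classical
  obtain ⟨j, hjk, hj⟩ := hneg
  set n := Q.natDegree with hn
  set a : ℕ → ℝ := fun i => Q.coeff i with ha
  set g : ℝ → ℝ := fun x => ∑ i ∈ Finset.range (n+1), a i * x ^ ((i:ℤ) - k) with hg
  set D : ℝ → ℝ := fun x =>
    ∑ i ∈ Finset.range (n+1), a i * ((((i:ℤ) - k : ℤ) : ℝ) * x ^ ((i:ℤ) - k - 1)) with hD
  have hderiv : ∀ x : ℝ, x ≠ 0 → HasDerivAt g (D x) x := fun x hx =>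
    HasDerivAt.fun_sum fun i _ => (hasDerivAt_zpow _ x (Or.inl hx)).const_mul _
  have hjmem : j ∈ Finset.range (n+1) := Finset.mem_range.2 (by omega)
  have hDpos : ∀ x : ℝ, 0 < x → 0 < D x := by
    intro x hx
    apply Finset.sum_pos'
    · intro i _
      have hp : (0:ℝ) < x ^ ((i:ℤ) - k - 1) := zpow_pos hx _
      rcases lt_or_ge i k with h | h
      · have h1 : a i ≤ 0 := hlow i h
        have h2 : (((i:ℤ) - k : ℤ) : ℝ) ≤ 0 := by
          have : (i:ℤ) - k ≤ 0 := by omega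
          exact_mod_cast this
        nlinarith [mul_nonneg (mul_nonneg (neg_nonneg.2 h1) (neg_nonneg.2 h2)) hp.le]
      · have h1 : 0 ≤ a i := hhigh i h
        have h2 : (0:ℝ) ≤ (((i:ℤ) - k : ℤ) : ℝ) := by
          have : (0:ℤ) ≤ (i:ℤ) - k := by omega
          exact_mod_cast this
        positivity
    · refine ⟨j, hjmem, ?_⟩
      have hp : (0:ℝ) < x ^ ((j:ℤ) - k - 1) := zpow_pos hx _
      have h2 : (((j:ℤ) - k : ℤ) : ℝ) < 0 := by
        have : (j:ℤ) - k < 0 := by omega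
        exact_mod_cast this
      have hja : a j < 0 := hj
      nlinarith [mul_pos (mul_pos (neg_pos.2 hja) (neg_pos.2 h2)) hp]
  have hcont : ContinuousOn g (Set.Ioi (0:ℝ)) := fun x hx =>
    ((hderiv x (ne_of_gt hx)).differentiableAt.continuousAt).continuousWithinAt
  have hmono : StrictMonoOn g (Set.Ioi (0:ℝ)) := by
    apply strictMonoOn_of_deriv_pos (convex_Ioi 0) hcont
    intro x hx
    rw [interior_Ioi] at hx
    rw [(hderiv x (ne_of_gt hx)).deriv]
    exact hDpos x hx
  have heval : ∀ x : ℝ, 0 < x → Q.eval x = x ^ k * g x := by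
    intro x hx
    have hxne : x ≠ 0 := ne_of_gt hx
    rw [Polynomial.eval_eq_sum_range, hg, Finset.mul_sum]
    apply Finset.sum_congr rfl
    intro i _
    have : x ^ k * (a i * x ^ ((i:ℤ) - k)) = a i * (x ^ (k:ℤ) * x ^ ((i:ℤ) - k)) := by
      rw [zpow_natCast]; ring
    rw [this, ← zpow_add₀ hxne]
    have : (k:ℤ) + ((i:ℤ) - k) = (i:ℤ) := by ring
    rw [this, zpow_natCast, ha]
  -- a point where g is positive
  have hdeg : 0 < Q.degree := by
    have hn0 : 0 < n := by omega
    exact Polynomial.natDegree_pos_iff_degree_pos.mp hn0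
  have hlead : 0 ≤ Q.leadingCoeff := hhigh n hk
  have htop := Q.tendsto_atTop_of_leadingCoeff_nonneg hdeg hlead
  obtain ⟨b, hb1, hb2⟩ := ((htop.eventually_gt_atTop 0).and (Filter.eventually_gt_atTop 0)).exists
  have hgb : 0 < g b := by
    have h1 := heval b hb2
    nlinarith [pow_pos hb2 k]
  -- a point where g is negative
  set S : ℝ := ∑ i ∈ Finset.Ico k (n+1), a i with hS
  have hS0 : 0 ≤ S := Finset.sum_nonneg fun i hi => hhigh i (Finset.mem_Ico.1 hi).1
  set c : ℝ := min 1 ((-a j) / (2*(S+1))) with hc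
  have hc0 : 0 < c := by
    apply lt_min one_pos
    apply div_pos (by linarith) (by linarith)
  have hc1 : c ≤ 1 := min_le_left _ _
  have hc2 : c ≤ (-a j) / (2*(S+1)) := min_le_right _ _
  have hgc : g c < 0 := by
    have hsplit : g c = (∑ i ∈ Finset.range k, a i * c ^ ((i:ℤ) - k))
        + ∑ i ∈ Finset.Ico k (n+1), a i * c ^ ((i:ℤ) - k) := by
      show (∑ i ∈ Finset.range (n+1), a i * c ^ ((i:ℤ) - k)) = _
      rw [Finset.range_eq_Ico, ← Finset.sum_Ico_consecutive _ (Nat.zero_le k) (by omega : k ≤ n+1),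
        ← Finset.range_eq_Ico]
    have hb1' : ∑ i ∈ Finset.range k, a i * c ^ ((i:ℤ) - k) ≤ a j * c ^ ((j:ℤ) - k) := by
      have hjmem' : j ∈ Finset.range k := Finset.mem_range.2 hjk
      rw [← Finset.sum_erase_add _ _ hjmem']
      have : ∑ i ∈ (Finset.range k).erase j, a i * c ^ ((i:ℤ) - k) ≤ 0 := by
        apply Finset.sum_nonpos
        intro i hi
        have hik : i < k := Finset.mem_range.1 (Finset.mem_of_mem_erase hi)
        have := hlow i hik
        have hp : (0:ℝ) < c ^ ((i:ℤ) - k) := zpow_pos hc0 _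
        nlinarith
      linarith
    have hterm : a j * c ^ ((j:ℤ) - k) ≤ -(2*(S+1)) := by
      have hkj : 1 ≤ k - j := by omega
      have hzp : c ^ ((j:ℤ) - k) = (c ^ (k - j))⁻¹ := by
        rw [← zpow_natCast c (k-j), ← zpow_neg]
        congr 1
        omega
      have hple : c ^ (k - j) ≤ c := pow_le_of_le_one hc0.le hc1 (by omega)
      have hppos : 0 < c ^ (k - j) := pow_pos hc0 _
      have hinv : c⁻¹ ≤ (c ^ (k - j))⁻¹ := by
        apply inv_anti₀ hppos hple
      have hja : a j < 0 := hj
      have h1 : a j * (c ^ (k-j))⁻¹ ≤ a j * c⁻¹ :=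
        mul_le_mul_of_nonpos_left hinv hja.le
      have h2 : a j * c⁻¹ ≤ -(2*(S+1)) := by
        have hmul : c * (2*(S+1)) ≤ -a j := by
          have h := hc2
          rw [le_div_iff₀ (by linarith : (0:ℝ) < 2*(S+1))] at h
          exact h
        have hcc : c * c⁻¹ = 1 := mul_inv_cancel₀ hc0.ne'
        nlinarith [inv_pos.mpr hc0]
      rw [hzp]
      linarith
    have hb2' : ∑ i ∈ Finset.Ico k (n+1), a i * c ^ ((i:ℤ) - k) ≤ S := by
      rw [hS]
      apply Finset.sum_le_sum
      intro i hi
      have hki : k ≤ i := (Finset.mem_Ico.1 hi).1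
      have hzp : c ^ ((i:ℤ) - k) = c ^ (i - k) := by
        rw [← zpow_natCast c (i-k)]
        congr 1
        omega
      have : c ^ (i - k) ≤ 1 := pow_le_one₀ hc0.le hc1
      have h0 : 0 ≤ a i := hhigh i hki
      calc a i * c ^ ((i:ℤ) - k) = a i * c ^ (i-k) := by rw [hzp]
        _ ≤ a i * 1 := mul_le_mul_of_nonneg_left this h0
        _ = a i := mul_one _
    rw [hsplit]
    linarith
  -- IVT
  have hcb : c < b := by
    by_contra hle
    push_neg at hle
    have := hmono.monotoneOn (Set.mem_Ioi.2 hb2) (Set.mem_Ioi.2 hc0) hle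
    linarith
  have hIcc : Set.Icc c b ⊆ Set.Ioi (0:ℝ) := fun y hy => lt_of_lt_of_le hc0 hy.1
  obtain ⟨x, hxmem, hgx⟩ := intermediate_value_Icc hcb.le (hcont.mono hIcc)
    (Set.mem_Icc.2 ⟨hgc.le, hgb.le⟩)
  have hx0 : 0 < x := lt_of_lt_of_le hc0 hxmem.1
  have hroot : Q.IsRoot x := by
    show Q.eval x = 0
    rw [heval x hx0, hgx, mul_zero]
  have huniq : ∀ y : ℝ, 0 < y → Q.IsRoot y → y = x := by
    intro y hy hyr
    have hgy : g y = 0 := by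
      have := heval y hy
      rw [Polynomial.IsRoot] at hyr
      have hyk : (0:ℝ) < y ^ k := pow_pos hy k
      nlinarith
    exact hmono.injOn (Set.mem_Ioi.2 hy) (Set.mem_Ioi.2 hx0) (by rw [hgy, hgx])
  -- simplicity
  have hd2 := (hasDerivAt_pow k x).mul (hderiv x hx0.ne')
  have hEq : (fun y : ℝ => Q.eval y) =ᶠ[nhds x] (fun y : ℝ => y ^ k * g y) :=
    Filter.eventuallyEq_of_mem (isOpen_Ioi.mem_nhds hx0) (fun y hy => heval y hy)
  have hd3 := hd2.congr_of_eventuallyEq hEq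
  have hQ' := (Q.hasDerivAt x).unique hd3
  have hder_ne : ¬ Q.derivative.IsRoot x := by
    rw [Polynomial.IsRoot, hQ', hgx]
    have := hDpos x hx0
    have := pow_pos hx0 k
    nlinarith
  have hm1 : 0 < Q.rootMultiplicity x := (Polynomial.rootMultiplicity_pos hQ).2 hroot
  have hm2 : ¬ 1 < Q.rootMultiplicity x := by
    rw [Polynomial.one_lt_rootMultiplicity_iff_isRoot hQ]
    rintro ⟨-, h'⟩
    exact hder_ne h'
  exact ⟨x, hx0, hroot, by omega, huniq⟩

/-- If `V(P) = 1`, then `P` has exactly one positive real root, and this root is simple. -/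
theorem unique_simple_positive_root_of_signVar_one (P : Polynomial ℝ)
    (hV : polySignVar P = 1) :
    ∃ x : ℝ, 0 < x ∧ P.IsRoot x ∧ P.rootMultiplicity x = 1 ∧
      ∀ y : ℝ, 0 < y → P.IsRoot y → y = x := by
  classical
  obtain ⟨ε, hε, k, h1, h2, h3, h4⟩ := signVar_one_split _ hV
  set n := P.natDegree with hn
  have hlen : ((List.range (n+1)).map fun i => P.coeff i).length = n + 1 := by simp
  have hget : ∀ i (hi : i < n + 1),
      ((List.range (n+1)).map fun i => P.coeff i)[i]'(by simpa [hlen] using hi) = P.coeff i := by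
    intro i hi
    simp
  have hεne : ε ≠ 0 := by rcases hε with h | h <;> rw [h] <;> norm_num
  set Q : Polynomial ℝ := Polynomial.C ε * P with hQdef
  obtain ⟨i₂, hi₂l, hi₂k, hi₂pos⟩ := h4
  rw [hlen] at hi₂l
  rw [hget i₂ hi₂l] at hi₂pos
  have hPne : P ≠ 0 := by
    intro h
    rw [h] at hi₂pos
    simp at hi₂pos
  have hQne : Q ≠ 0 := mul_ne_zero (by simpa using hεne) hPne
  have hQdeg : Q.natDegree = n := by
    rw [hQdef, Polynomial.natDegree_C_mul hεne]
  have hQcoeff : ∀ i, Q.coeff i = ε * P.coeff i := by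
    intro i; rw [hQdef, Polynomial.coeff_C_mul]
  have hkn : k ≤ n := by omega
  obtain ⟨x, hx0, hxr, hxm, hxu⟩ := main_aux Q k hQne (by rw [hQdeg]; exact hkn)
    (fun i hi => by
      rw [hQcoeff]
      have hil : i < n + 1 := by omega
      have := h1 i (by simpa [hlen] using hil) hi
      rwa [hget i hil] at this)
    (fun i hi => by
      rw [hQcoeff]
      rcases le_or_gt i n with h | h
      · have hil : i < n + 1 := by omega
        have := h2 i (by simpa [hlen] using hil) hi
        rwa [hget i hil] at this
      · rw [Polynomial.coeff_eq_zero_of_natDegree_lt h, mul_zero])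
    (by
      obtain ⟨i₁, hi₁l, hi₁k, hi₁neg⟩ := h3
      rw [hlen] at hi₁l
      rw [hget i₁ hi₁l] at hi₁neg
      exact ⟨i₁, hi₁k, by rw [hQcoeff]; exact hi₁neg⟩)
  have hRootIff : ∀ y : ℝ, (Q.IsRoot y ↔ P.IsRoot y) := by
    intro y
    simp only [hQdef, Polynomial.IsRoot, Polynomial.eval_mul, Polynomial.eval_C]
    constructor
    · intro h; rcases mul_eq_zero.1 h with h | h
      · exact absurd h hεne
      · exact h
    · intro h; rw [h, mul_zero]
  have hMult : Q.rootMultiplicity x = P.rootMultiplicity x := by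
    rw [hQdef, Polynomial.rootMultiplicity_mul (by rw [← hQdef]; exact hQne)]
    rw [Polynomial.rootMultiplicity_eq_zero (by simp [Polynomial.IsRoot, hεne]), zero_add]
  exact ⟨x, hx0, (hRootIff x).1 hxr, by rw [← hMult]; exact hxm,
    fun y hy hyr => hxu y hy ((hRootIff y).2 hyr)⟩
end

section
/- The Mignotte polynomial M_n(x) = x^n − 2(5x − 1)^2 has exactly three simple real roots when n ≥ 3 is odd, and exactly four simple real roots when n ≥ 4 is even. -/
open Polynomial

lemma aux_pow_sub_C_card {m : ℕ} (hm : m ≠ 0) {c : ℝ} (hc : 0 < c) :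
    Multiset.card ((X : ℝ[X]) ^ m - C c).roots ≤ 2 ∧
      (Odd m → Multiset.card ((X : ℝ[X]) ^ m - C c).roots ≤ 1) := by
  have hmR : (m : ℝ) ≠ 0 := Nat.cast_ne_zero.mpr hm
  have hsep : ((X : ℝ[X]) ^ m - C c).Separable := separable_X_pow_sub_C c hmR hc.ne'
  have hnd : ((X : ℝ[X]) ^ m - C c).roots.Nodup := nodup_roots hsep
  set r₀ : ℝ := c ^ ((m : ℝ)⁻¹) with hr₀def
  have hr₀nn : 0 ≤ r₀ := Real.rpow_nonneg hc.le _
  have hr₀ : r₀ ^ m = c := by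
    rw [hr₀def, ← Real.rpow_natCast (c ^ ((m:ℝ)⁻¹)) m, ← Real.rpow_mul hc.le,
      inv_mul_cancel₀ hmR, Real.rpow_one]
  have hroot : ∀ x ∈ ((X : ℝ[X]) ^ m - C c).roots, x ^ m = c := by
    intro x hx
    have := isRoot_of_mem_roots hx
    simpa [IsRoot, sub_eq_zero] using this
  constructor
  · have hsub : ((X : ℝ[X]) ^ m - C c).roots.toFinset ⊆ ({r₀, -r₀} : Finset ℝ) := by
      intro x hx
      have hxm := hroot x (Multiset.mem_toFinset.mp hx)
      have habs : |x| = r₀ := by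
        have h1 : |x| ^ m = r₀ ^ m := by
          rw [← abs_pow, hxm, hr₀, abs_of_pos hc]
        exact (pow_left_strictMonoOn₀ hm).injOn (abs_nonneg x) hr₀nn h1
      rcases abs_eq hr₀nn |>.mp habs with h | h <;> simp [h]
    calc Multiset.card ((X : ℝ[X]) ^ m - C c).roots
        = ((X : ℝ[X]) ^ m - C c).roots.toFinset.card :=
          (Multiset.toFinset_card_of_nodup hnd).symm
      _ ≤ ({r₀, -r₀} : Finset ℝ).card := Finset.card_le_card hsub
      _ ≤ 2 := Finset.card_insert_le _ _ |>.trans (by simp)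
  · intro hodd
    have hsub : ((X : ℝ[X]) ^ m - C c).roots.toFinset ⊆ ({r₀} : Finset ℝ) := by
      intro x hx
      have hxm := hroot x (Multiset.mem_toFinset.mp hx)
      have : x = r₀ := (Odd.strictMono_pow hodd).injective (by rw [hxm, hr₀])
      simp [this]
    calc Multiset.card ((X : ℝ[X]) ^ m - C c).roots
        = ((X : ℝ[X]) ^ m - C c).roots.toFinset.card :=
          (Multiset.toFinset_card_of_nodup hnd).symm
      _ ≤ ({r₀} : Finset ℝ).card := Finset.card_le_card hsub
      _ ≤ 1 := by simp

lemma mignotte_aux (n : ℕ) (hn : 3 ≤ n) :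
    (Odd n →
      Multiset.card ((X : ℝ[X]) ^ n - C 2 * (C 5 * X - 1) ^ 2).roots = 3 ∧
      ((X : ℝ[X]) ^ n - C 2 * (C 5 * X - 1) ^ 2).roots.Nodup) ∧
    (Even n →
      Multiset.card ((X : ℝ[X]) ^ n - C 2 * (C 5 * X - 1) ^ 2).roots = 4 ∧
      ((X : ℝ[X]) ^ n - C 2 * (C 5 * X - 1) ^ 2).roots.Nodup) := by
  have hn0 : n ≠ 0 := by omega
  set M : ℝ[X] := X ^ n - C 2 * (C 5 * X - 1) ^ 2 with hMdef
  have hM : M = X ^ n - 50 * X ^ 2 + 20 * X - 2 := by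
    rw [hMdef]; simp only [map_ofNat]; ring
  -- evaluation formula
  have heval : ∀ x : ℝ, eval x M = x ^ n - 2 * (5 * x - 1) ^ 2 := by
    intro x; rw [hMdef]; simp
  have hM0 : M ≠ 0 := by
    intro h
    have h0 : eval 0 M = -2 := by rw [heval, zero_pow hn0]; norm_num
    rw [h] at h0; simp at h0
  -- derivatives
  have hD1 : derivative M = C (n : ℝ) * X ^ (n - 1) - 100 * X + 20 := by
    rw [hM]
    simp [derivative_X_pow, map_ofNat]
    ring
  have hD2 : derivative (derivative M) =
      C ((n : ℝ) * ((n : ℝ) - 1)) * X ^ (n - 2) - 100 := by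
    rw [hD1]
    simp [derivative_X_pow, map_ofNat, derivative_mul, Nat.cast_sub (by omega : 1 ≤ n)]
    rw [show n - 1 - 1 = n - 2 from by omega]
    ring
  set a : ℝ := (n : ℝ) * ((n : ℝ) - 1) with hadef
  have hnR : (3 : ℝ) ≤ (n : ℝ) := by exact_mod_cast hn
  have ha : 0 < a := by rw [hadef]; nlinarith
  have hfac : derivative (derivative M) = C a * (X ^ (n - 2) - C (100 / a)) := by
    rw [hD2, mul_sub, ← C_mul, mul_div_cancel₀ _ ha.ne', map_ofNat]
  have hrootsD2 : (derivative (derivative M)).roots =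
      ((X : ℝ[X]) ^ (n - 2) - C (100 / a)).roots := by
    rw [hfac, roots_C_mul _ ha.ne']
  have hca : (0 : ℝ) < 100 / a := by positivity
  have hm2 : n - 2 ≠ 0 := by omega
  have haux := aux_pow_sub_C_card hm2 hca
  -- upper bound
  have hup : Multiset.card M.roots ≤
      Multiset.card (derivative (derivative M)).roots + 2 := by
    have h1 := M.card_roots_le_derivative
    have h2 := (derivative M).card_roots_le_derivative
    omega
  -- intermediate value roots
  have hcont : ∀ s : Set ℝ, ContinuousOn (fun x => eval x M) s :=
    fun s => (M.continuous_aeval).continuousOn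
  have e0 : eval 0 M = -2 := by rw [heval, zero_pow hn0]; norm_num
  have e5 : 0 < eval (1/5 : ℝ) M := by
    rw [heval]; norm_num
  have e1 : eval 1 M = -31 := by rw [heval]; norm_num
  have e51 : 0 < eval 51 M := by
    rw [heval]
    have : (51 : ℝ) ^ 3 ≤ 51 ^ n := pow_le_pow_right₀ (by norm_num) hn
    nlinarith
  obtain ⟨r1, hr1I, hr1⟩ := intermediate_value_Ioo (by norm_num : (0:ℝ) ≤ 1/5)
    (hcont _) (by rw [e0]; exact ⟨by norm_num, e5⟩)
  obtain ⟨r2, hr2I, hr2⟩ := intermediate_value_Ioo' (by norm_num : (1/5:ℝ) ≤ 1)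
    (hcont _) (by rw [e1]; exact ⟨by norm_num, e5⟩)
  obtain ⟨r3, hr3I, hr3⟩ := intermediate_value_Ioo (by norm_num : (1:ℝ) ≤ 51)
    (hcont _) (by rw [e1]; exact ⟨by norm_num, e51⟩)
  have hr1M : r1 ∈ M.roots := (mem_roots hM0).mpr hr1
  have hr2M : r2 ∈ M.roots := (mem_roots hM0).mpr hr2
  have hr3M : r3 ∈ M.roots := (mem_roots hM0).mpr hr3
  obtain ⟨hr1l, hr1u⟩ := hr1I
  obtain ⟨hr2l, hr2u⟩ := hr2I
  obtain ⟨hr3l, hr3u⟩ := hr3I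
  have hne12 : r1 ≠ r2 := ne_of_lt (lt_trans hr1u hr2l)
  have hne13 : r1 ≠ r3 := ne_of_lt (by linarith)
  have hne23 : r2 ≠ r3 := ne_of_lt (lt_trans hr2u hr3l)
  constructor
  · -- odd case
    intro hodd
    have hodd2 : Odd (n - 2) := by
      rcases hodd with ⟨k, hk⟩; exact ⟨k - 1, by omega⟩
    have hupper : Multiset.card M.roots ≤ 3 := by
      rw [hrootsD2] at hup
      have := haux.2 hodd2
      omega
    have hsub : ({r1, r2, r3} : Finset ℝ) ⊆ M.roots.toFinset := by
      intro x hx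
      simp only [Finset.mem_insert, Finset.mem_singleton] at hx
      rcases hx with h | h | h <;> subst h <;> exact Multiset.mem_toFinset.mpr ‹_›
    have hcard3 : ({r1, r2, r3} : Finset ℝ).card = 3 := by
      rw [Finset.card_insert_of_notMem (by simp [hne12, hne13]),
        Finset.card_insert_of_notMem (by simp [hne23]), Finset.card_singleton]
    have hlow : 3 ≤ M.roots.toFinset.card := hcard3 ▸ Finset.card_le_card hsub
    have htf : M.roots.toFinset.card ≤ Multiset.card M.roots :=
      Multiset.toFinset_card_le _
    have hcardeq : Multiset.card M.roots = 3 := by omega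
    exact ⟨hcardeq, Multiset.toFinset_card_eq_card_iff_nodup.mp (by omega)⟩
  · -- even case
    intro hev
    have hupper : Multiset.card M.roots ≤ 4 := by
      rw [hrootsD2] at hup
      have := haux.1
      omega
    have e51' : 0 < eval (-51 : ℝ) M := by
      rw [heval, hev.neg_pow]
      have : (51 : ℝ) ^ 3 ≤ 51 ^ n := pow_le_pow_right₀ (by norm_num) hn
      nlinarith
    obtain ⟨r4, hr4I, hr4⟩ := intermediate_value_Ioo' (by norm_num : (-51:ℝ) ≤ 0)
      (hcont _) (by rw [e0]; exact ⟨by norm_num, e51'⟩)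
    have hr4M : r4 ∈ M.roots := (mem_roots hM0).mpr hr4
    obtain ⟨hr4l, hr4u⟩ := hr4I
    have hne41 : r4 ≠ r1 := ne_of_lt (lt_trans hr4u hr1l)
    have hne42 : r4 ≠ r2 := ne_of_lt (by linarith)
    have hne43 : r4 ≠ r3 := ne_of_lt (by linarith)
    have hsub : ({r4, r1, r2, r3} : Finset ℝ) ⊆ M.roots.toFinset := by
      intro x hx
      simp only [Finset.mem_insert, Finset.mem_singleton] at hx
      rcases hx with h | h | h | h <;> subst h <;> exact Multiset.mem_toFinset.mpr ‹_›
    have hcard4 : ({r4, r1, r2, r3} : Finset ℝ).card = 4 := by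
      rw [Finset.card_insert_of_notMem (by simp [hne41, hne42, hne43]),
        Finset.card_insert_of_notMem (by simp [hne12, hne13]),
        Finset.card_insert_of_notMem (by simp [hne23]), Finset.card_singleton]
    have hlow : 4 ≤ M.roots.toFinset.card := hcard4 ▸ Finset.card_le_card hsub
    have htf : M.roots.toFinset.card ≤ Multiset.card M.roots :=
      Multiset.toFinset_card_le _
    have hcardeq : Multiset.card M.roots = 4 := by omega
    exact ⟨hcardeq, Multiset.toFinset_card_eq_card_iff_nodup.mp (by omega)⟩

/-- The Mignotte polynomial `Mₙ(x) = xⁿ − 2(5x − 1)²` has exactly three simple real roots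
when `n ≥ 3` is odd and exactly four simple real roots when `n ≥ 3` is even. -/
theorem mignotte_real_roots (n : ℕ) (hn : 3 ≤ n) :
    let M : Polynomial ℝ :=
      Polynomial.X ^ n - Polynomial.C 2 * (Polynomial.C 5 * Polynomial.X - 1) ^ 2
    (Odd n → M.roots.card = 3 ∧ M.roots.Nodup) ∧
    (Even n → M.roots.card = 4 ∧ M.roots.Nodup) := by
  intro M
  exact mignotte_aux n hn
end

section
/- Let a, b, c, d be real numbers with ad − bc ≠ 0 and c, d ≥ 0, not both zero, and let P be a real polynomial of degree n. Define Q(x) = (c x + d)^n · P((a x + b)/(c x + d)). Then x₀ > 0 with c x₀ + d > 0 is a root of Q if and only if (a x₀ + b)/(c x₀ + d) is a root of P; consequently the roots of P in the open interval with endpoints b/d and a/c (when cd ≠ 0) correspond bijectively to the positive roots of Q. -/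
/-- Möbius-transformation correspondence: with `ad − bc ≠ 0`, `c, d ≥ 0` not both zero,
`n = deg P`, and `Q(x) = (cx + d)ⁿ P((ax + b)/(cx + d))`, a point `x₀ > 0` with
`c x₀ + d > 0` is a root of `Q` iff `(a x₀ + b)/(c x₀ + d)` is a root of `P`; when
`cd ≠ 0` the positive roots of `Q` correspond bijectively to the roots of `P` in the open
interval with endpoints `b/d` and `a/c`. -/
theorem mobius_root_correspondence (a b c d : ℝ) (n : ℕ)
    (hdet : a * d - b * c ≠ 0) (hc : 0 ≤ c) (hd : 0 ≤ d) (hcd : ¬(c = 0 ∧ d = 0))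
    (P Q : Polynomial ℝ) (hn : P.natDegree = n)
    (hQ : ∀ x : ℝ, c * x + d ≠ 0 →
      Q.eval x = (c * x + d) ^ n * P.eval ((a * x + b) / (c * x + d))) :
    (∀ x₀ : ℝ, 0 < x₀ → 0 < c * x₀ + d →
      (Q.IsRoot x₀ ↔ P.IsRoot ((a * x₀ + b) / (c * x₀ + d)))) ∧
    (c * d ≠ 0 → Set.BijOn (fun x : ℝ => (a * x + b) / (c * x + d))
      {x : ℝ | 0 < x ∧ Q.IsRoot x}
      {y : ℝ | min (a / c) (b / d) < y ∧ y < max (a / c) (b / d) ∧ P.IsRoot y}) := by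
  have hpart1 : ∀ x₀ : ℝ, 0 < x₀ → 0 < c * x₀ + d →
      (Q.IsRoot x₀ ↔ P.IsRoot ((a * x₀ + b) / (c * x₀ + d))) := by
    intro x₀ hx hden
    have h0 : c * x₀ + d ≠ 0 := ne_of_gt hden
    have hpow : (c * x₀ + d) ^ n ≠ 0 := pow_ne_zero _ h0
    simp only [Polynomial.IsRoot, hQ x₀ h0, mul_eq_zero]
    constructor
    · rintro (h | h)
      · exact absurd h hpow
      · exact h
    · exact Or.inr
  refine ⟨hpart1, ?_⟩
  intro hcd0
  have hc0 : 0 < c := lt_of_le_of_ne hc (Ne.symm (left_ne_zero_of_mul hcd0))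
  have hd0 : 0 < d := lt_of_le_of_ne hd (Ne.symm (right_ne_zero_of_mul hcd0))
  -- key interval fact
  have key : ∀ x : ℝ, 0 < x →
      min (a / c) (b / d) < (a * x + b) / (c * x + d) ∧
      (a * x + b) / (c * x + d) < max (a / c) (b / d) := by
    intro x hx
    have hden : 0 < c * x + d := by positivity
    rcases hdet.lt_or_gt with h | h
    · -- a*d < b*c : a/c < y < b/d
      have h1 : a / c < (a * x + b) / (c * x + d) := by
        rw [div_lt_div_iff₀ hc0 hden]; nlinarith
      have h2 : (a * x + b) / (c * x + d) < b / d := by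
        rw [div_lt_div_iff₀ hden hd0]; nlinarith
      exact ⟨lt_of_le_of_lt (min_le_left _ _) h1,
        lt_of_lt_of_le h2 (le_max_right _ _)⟩
    · -- b*c < a*d : b/d < y < a/c
      have h1 : b / d < (a * x + b) / (c * x + d) := by
        rw [div_lt_div_iff₀ hd0 hden]; nlinarith
      have h2 : (a * x + b) / (c * x + d) < a / c := by
        rw [div_lt_div_iff₀ hden hc0]; nlinarith
      exact ⟨lt_of_le_of_lt (min_le_right _ _) h1,
        lt_of_lt_of_le h2 (le_max_left _ _)⟩
  refine ⟨?_, ?_, ?_⟩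
  · -- MapsTo
    rintro x ⟨hx, hQx⟩
    have hden : 0 < c * x + d := by positivity
    exact ⟨(key x hx).1, (key x hx).2, (hpart1 x hx hden).mp hQx⟩
  · -- InjOn
    rintro x₁ ⟨hx₁, -⟩ x₂ ⟨hx₂, -⟩ heq
    have hden₁ : (0:ℝ) < c * x₁ + d := by positivity
    have hden₂ : (0:ℝ) < c * x₂ + d := by positivity
    simp only at heq
    rw [div_eq_div_iff hden₁.ne' hden₂.ne'] at heq
    have h2 : (a * d - b * c) * (x₁ - x₂) = 0 := by linear_combination heq
    rcases mul_eq_zero.mp h2 with h | h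
    · exact absurd h hdet
    · linarith [sub_eq_zero.mp h]
  · -- SurjOn
    rintro y ⟨hy1, hy2, hPy⟩
    have hya : y ≠ a / c := by
      intro h
      rw [h] at hy1 hy2
      rcases min_lt_iff.mp hy1 with h' | h' <;> rcases lt_max_iff.mp hy2 with h'' | h'' <;>
        linarith
    have hacy : a - c * y ≠ 0 := by
      intro h
      apply hya
      rw [eq_div_iff hc0.ne']
      linarith
    set x := (d * y - b) / (a - c * y) with hxdef
    have hx : 0 < x := by
      rcases hdet.lt_or_gt with h | h
      · -- a*d < b*c : a/c < b/d, so min = a/c, max = b/d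
        have hlt : a / c < b / d := by rw [div_lt_div_iff₀ hc0 hd0]; nlinarith
        have hy1' : a / c < y := by
          have := min_eq_left hlt.le; rw [this] at hy1; exact hy1
        have hy2' : y < b / d := by
          have := max_eq_right hlt.le; rw [this] at hy2; exact hy2
        have hnum : d * y - b < 0 := by
          have : y < b / d := hy2'
          rw [lt_div_iff₀ hd0] at this; nlinarith
        have hdenn : a - c * y < 0 := by
          rw [div_lt_iff₀ hc0] at hy1'; nlinarith
        exact div_pos_of_neg_of_neg hnum hdenn
      · have hlt : b / d < a / c := by rw [div_lt_div_iff₀ hd0 hc0]; nlinarith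
        have hy1' : b / d < y := by
          have := min_eq_right hlt.le; rw [this] at hy1; exact hy1
        have hy2' : y < a / c := by
          have := max_eq_left hlt.le; rw [this] at hy2; exact hy2
        have hnum : 0 < d * y - b := by
          rw [div_lt_iff₀ hd0] at hy1'; nlinarith
        have hdenn : 0 < a - c * y := by
          rw [lt_div_iff₀ hc0] at hy2'; nlinarith
        exact div_pos hnum hdenn
    have hden : 0 < c * x + d := by positivity
    have hfx : (a * x + b) / (c * x + d) = y := by
      rw [div_eq_iff hden.ne', hxdef]
      linear_combination div_mul_cancel₀ (d * y - b) hacy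
    refine ⟨x, ⟨hx, ?_⟩, hfx⟩
    exact (hpart1 x hx hden).mpr (by rw [hfx]; exact hPy)
end
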